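/- arXiv:2108.06058 — 2 statements merged into one kernel-verified Lean document; each statement's English description precedes it below -/
import Mathlib

section
/- Let (Ω, d) be a metric space, X a random vector in ℝ^p, Y a random element of Ω, θ₀ ∈ ℝ^p, and for each unit vector θ let g(·, θ) : ℝ → Ω satisfy: g(θ'x, θ) minimizes ω ↦ E[d²(Y, ω) | θ'X = θ'x] uniquely for each x. Define W(θ) = E[d²(Y, g(θ'X, θ))]. Then W(θ₀) ≤ W(θ) for every unit vector θ, i.e., θ₀ minimizes W. [Here assume the single index model E-characterization: E[d²(Y, ω)|X = x] is minimized at g(θ₀'x, θ₀) for all x.] -/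
/-!
By the tower property, the risk `E[d²(Y, h(X))]` of any measurable predictor `h` is the average
over `X` of the conditional risk `ω ↦ E[d²(Y, ω) | X = x]` evaluated at `ω = h(x)`. The single
index assumption says that `x ↦ g(θ₀'x, θ₀)` minimizes this conditional risk at every `x`, and
`x ↦ g(θ'x, θ)` is just another measurable predictor, so integrating the pointwise inequality
gives `W(θ₀) ≤ W(θ)`. Boundedness of `Ω` makes all the risks integrable.
-/

open MeasureTheory ProbabilityTheory

lemma integrable_dist_sq_of_isBounded {γ Ω : Type*} [MeasurableSpace γ] [PseudoMetricSpace Ω]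
    [MeasurableSpace Ω] [OpensMeasurableSpace Ω] [SecondCountableTopology Ω]
    (hbdd : Bornology.IsBounded (Set.univ : Set Ω)) (ν : Measure γ) [IsFiniteMeasure ν]
    {f h : γ → Ω} (hf : Measurable f) (hh : Measurable h) :
    Integrable (fun q => dist (f q) (h q) ^ 2) ν := by
  refine Integrable.of_bound ((hf.dist hh).pow_const 2).aestronglyMeasurable
    (Metric.diam (Set.univ : Set Ω) ^ 2) (Filter.Eventually.of_forall fun q => ?_)
  rw [Real.norm_of_nonneg (by positivity)]
  exact pow_le_pow_left₀ dist_nonneg (Metric.dist_le_diam_of_mem hbdd trivial trivial) 2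

section CondDistrib

variable {α β Ω E : Type*} [MeasurableSpace α] [MeasurableSpace β] [MeasurableSpace Ω]
  [StandardBorelSpace Ω] [Nonempty Ω] [NormedAddCommGroup E] [NormedSpace ℝ E]
  {μ : Measure α} [IsFiniteMeasure μ] {X : α → β} {Y : α → Ω}

lemma integral_comp_prodMk_eq_integral_condDistrib (hX : Measurable X) (hY : AEMeasurable Y μ)
    {f : β × Ω → E} (hf : Integrable f (μ.map fun a => (X a, Y a))) :
    ∫ a, f (X a, Y a) ∂μ = ∫ a, ∫ y, f (X a, y) ∂condDistrib Y X μ (X a) ∂μ := by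
  rw [← integral_map (hX.aemeasurable.prodMk hY) hf.aestronglyMeasurable,
    ← compProd_map_condDistrib hY, Measure.integral_compProd (by rwa [compProd_map_condDistrib hY]),
    integral_map hX.aemeasurable (hf.1.integral_condDistrib_map hY)]

lemma integral_le_integral_of_integral_condDistrib_le (hX : Measurable X) (hY : AEMeasurable Y μ)
    {f f' : β × Ω → ℝ} (hf : Integrable f (μ.map fun a => (X a, Y a)))
    (hf' : Integrable f' (μ.map fun a => (X a, Y a)))
    (hle : ∀ x, ∫ y, f (x, y) ∂condDistrib Y X μ x ≤ ∫ y, f' (x, y) ∂condDistrib Y X μ x) :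
    ∫ a, f (X a, Y a) ∂μ ≤ ∫ a, f' (X a, Y a) ∂μ := by
  rw [integral_comp_prodMk_eq_integral_condDistrib hX hY hf,
    integral_comp_prodMk_eq_integral_condDistrib hX hY hf']
  exact integral_mono (hf.integral_condDistrib hX.aemeasurable hY)
    (hf'.integral_condDistrib hX.aemeasurable hY) fun a => hle (X a)

end CondDistrib

theorem stmt_7_general {α : Type*} [MeasurableSpace α]
    {Ω : Type*} [MetricSpace Ω] [MeasurableSpace Ω] [BorelSpace Ω] [PolishSpace Ω] [Nonempty Ω]
    (hbdd : Bornology.IsBounded (Set.univ : Set Ω))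
    (μ : Measure α) [IsProbabilityMeasure μ] (p : ℕ)
    (X : α → (Fin p → ℝ)) (Y : α → Ω) (hX : Measurable X) (hY : Measurable Y)
    (g : (Fin p → ℝ) → ℝ → Ω) (hgmeas : ∀ θ : Fin p → ℝ, Measurable (g θ))
    (θ₀ : Fin p → ℝ)
    -- single index model: g(θ₀'x, θ₀) minimizes ω ↦ E[d²(Y, ω) | X = x] for all x
    (h0 : ∀ x : Fin p → ℝ, ∀ ω : Ω,
      (∫ y, dist y (g θ₀ (∑ j, θ₀ j * x j)) ^ 2 ∂((condDistrib Y X μ) x))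
        ≤ ∫ y, dist y ω ^ 2 ∂((condDistrib Y X μ) x)) :
    ∀ θ : Fin p → ℝ, ‖θ‖ = 1 →
      (∫ a, dist (Y a) (g θ₀ (∑ j, θ₀ j * X a j)) ^ 2 ∂μ)
        ≤ ∫ a, dist (Y a) (g θ (∑ j, θ j * X a j)) ^ 2 ∂μ := by
  intro θ _
  have hrisk : ∀ η : Fin p → ℝ, Integrable
      (fun q : (Fin p → ℝ) × Ω => dist q.2 (g η (∑ j, η j * q.1 j)) ^ 2)
      (μ.map fun a => (X a, Y a)) := fun η =>
    integrable_dist_sq_of_isBounded hbdd _ measurable_snd ((hgmeas η).comp (by fun_prop))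
  exact integral_le_integral_of_integral_condDistrib_le hX hY.aemeasurable (hrisk θ₀) (hrisk θ)
    fun x => h0 x (g θ (∑ j, θ j * x j))

/-- In the Fréchet single index model, `θ₀` minimizes `W(θ) = E[d²(Y, g(θ'X, θ))]` over unit
vectors `θ`, where `g(θ'x, θ)` minimizes `ω ↦ E[d²(Y, ω) | θ'X = θ'x]` and (single index
assumption) `g(θ₀'x, θ₀)` minimizes `ω ↦ E[d²(Y, ω) | X = x]`. -/
theorem stmt_7 {α : Type*} [MeasurableSpace α]
    {Ω : Type*} [MetricSpace Ω] [MeasurableSpace Ω] [BorelSpace Ω] [PolishSpace Ω] [Nonempty Ω]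
    (hbdd : Bornology.IsBounded (Set.univ : Set Ω))
    (μ : Measure α) [IsProbabilityMeasure μ] (p : ℕ)
    (X : α → (Fin p → ℝ)) (Y : α → Ω) (hX : Measurable X) (hY : Measurable Y)
    (g : (Fin p → ℝ) → ℝ → Ω) (hgmeas : ∀ θ : Fin p → ℝ, Measurable (g θ))
    (θ₀ : Fin p → ℝ) (hθ₀ : ‖θ₀‖ = 1)
    -- for each unit θ and each x, g(θ'x, θ) uniquely minimizes ω ↦ E[d²(Y, ω) | θ'X = θ'x]
    (hg : ∀ θ : Fin p → ℝ, ‖θ‖ = 1 → ∀ x : Fin p → ℝ, ∀ ω : Ω,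
      ω ≠ g θ (∑ j, θ j * x j) →
      (∫ y, dist y (g θ (∑ j, θ j * x j)) ^ 2
          ∂((condDistrib Y (fun a => ∑ j, θ j * X a j) μ) (∑ j, θ j * x j)))
        < ∫ y, dist y ω ^ 2
          ∂((condDistrib Y (fun a => ∑ j, θ j * X a j) μ) (∑ j, θ j * x j)))
    -- single index model: g(θ₀'x, θ₀) minimizes ω ↦ E[d²(Y, ω) | X = x] for all x
    (h0 : ∀ x : Fin p → ℝ, ∀ ω : Ω,
      (∫ y, dist y (g θ₀ (∑ j, θ₀ j * x j)) ^ 2 ∂((condDistrib Y X μ) x))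
        ≤ ∫ y, dist y ω ^ 2 ∂((condDistrib Y X μ) x)) :
    ∀ θ : Fin p → ℝ, ‖θ‖ = 1 →
      (∫ a, dist (Y a) (g θ₀ (∑ j, θ₀ j * X a j)) ^ 2 ∂μ)
        ≤ ∫ a, dist (Y a) (g θ (∑ j, θ j * X a j)) ^ 2 ∂μ :=
  stmt_7_general hbdd μ p X Y hX hY g hgmeas θ₀ h0
end

section
/- With the setup of the previous statement (W(θ) = E[d²(Y, g(θ'X, θ))] and g(θ₀'X, θ₀) the conditional Fréchet mean given X), if additionally P(g(θ'X, θ) ≠ g(θ₀'X, θ₀)) > 0 for every unit vector θ ≠ θ₀, and for each x the minimizer of ω ↦ E[d²(Y, ω)|X = x] is unique with strict inequality E[d²(Y,ω)|X=x] > E[d²(Y, m(x))|X=x] for ω ≠ m(x), then W(θ) > W(θ₀) for all θ ≠ θ₀, i.e., θ₀ is the unique minimizer of W. -/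
open MeasureTheory ProbabilityTheory Set Filter

/-! Disintegrating the joint law of `(X, Y)` writes the risk `E[d²(Y, F(X))]` of any measurable
`F` as the integral, over the law of `X`, of the conditional risk `x ↦ E[d²(Y, F x) | X = x]`;
boundedness of `Ω` makes all these integrals finite. The conditional risk of `F₀ = g(θ₀'·, θ₀)`
is pointwise at most that of `F = g(θ'·, θ)`, and strictly smaller wherever `F ≠ F₀`, which
happens with positive probability. -/

theorem integral_lt_integral_of_ae_le_of_measure_setOfPred_lt_ne_zero {β : Type*}
    [MeasurableSpace β] {ν : Measure β} {f g : β → ℝ} (hf : Integrable f ν) (hg : Integrable g ν)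
    (hle : f ≤ᵐ[ν] g) (hlt : ν {x | f x < g x} ≠ 0) :
    ∫ x, f x ∂ν < ∫ x, g x ∂ν := by
  rw [← sub_pos, ← integral_sub hg hf, integral_pos_iff_support_of_nonneg_ae
    (hle.mono fun x => sub_nonneg.2) (hg.sub hf)]
  exact pos_iff_ne_zero.2 (mt (measure_mono_null fun x hx => (sub_pos.2 hx.out).ne') hlt)

theorem integrable_dist_sq_of_boundedSpace {γ Ω : Type*} [MeasurableSpace γ] [PseudoMetricSpace Ω]
    [BoundedSpace Ω] [MeasurableSpace Ω] [OpensMeasurableSpace Ω] [SecondCountableTopology Ω]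
    {ρ : Measure γ} [IsFiniteMeasure ρ] {u v : γ → Ω} (hu : Measurable u) (hv : Measurable v) :
    Integrable (fun c => dist (u c) (v c) ^ 2) ρ := by
  refine Integrable.of_bound ((hu.dist hv).pow_const 2).aestronglyMeasurable
    (Metric.diam (univ : Set Ω) ^ 2) (Eventually.of_forall fun c => ?_)
  rw [Real.norm_of_nonneg (by positivity)]
  exact pow_le_pow_left₀ dist_nonneg
    (Metric.dist_le_diam_of_mem BoundedSpace.bounded_univ (mem_univ _) (mem_univ _)) 2

theorem integral_comp_eq_integral_integral_condDistrib {α β Ω E : Type*} [MeasurableSpace α]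
    [MeasurableSpace β] [MeasurableSpace Ω] [StandardBorelSpace Ω] [Nonempty Ω]
    [NormedAddCommGroup E] [NormedSpace ℝ E] {μ : Measure α} [IsFiniteMeasure μ]
    {X : α → β} {Y : α → Ω} (hX : AEMeasurable X μ) (hY : AEMeasurable Y μ) {f : β × Ω → E}
    (hf : Integrable f (μ.map fun a => (X a, Y a))) :
    ∫ a, f (X a, Y a) ∂μ = ∫ x, ∫ y, f (x, y) ∂condDistrib Y X μ x ∂μ.map X := by
  rw [← Measure.integral_compProd (compProd_map_condDistrib hY ▸ hf),
    compProd_map_condDistrib hY, integral_map (hX.prodMk hY) hf.aestronglyMeasurable]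

section FrechetRisk

variable {α β Ω : Type*} [MeasurableSpace α] [MeasurableSpace β] [PseudoMetricSpace Ω]
  [BoundedSpace Ω] [MeasurableSpace Ω] [BorelSpace Ω] [PolishSpace Ω] [Nonempty Ω]
  {μ : Measure α} [IsFiniteMeasure μ] {X : α → β} {Y : α → Ω}

theorem integral_dist_sq_eq_integral_condDistrib (hX : Measurable X) (hY : Measurable Y)
    {F : β → Ω} (hF : Measurable F) :
    ∫ a, dist (Y a) (F (X a)) ^ 2 ∂μ
      = ∫ x, ∫ y, dist y (F x) ^ 2 ∂condDistrib Y X μ x ∂μ.map X :=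
  integral_comp_eq_integral_integral_condDistrib (f := fun q => dist q.2 (F q.1) ^ 2)
    hX.aemeasurable hY.aemeasurable
    (integrable_dist_sq_of_boundedSpace measurable_snd (hF.comp measurable_fst))

theorem integrable_integral_dist_sq_condDistrib (hY : Measurable Y) {F : β → Ω}
    (hF : Measurable F) :
    Integrable (fun x => ∫ y, dist y (F x) ^ 2 ∂condDistrib Y X μ x) (μ.map X) :=
  Integrable.integral_condDistrib_map (f := fun q => dist q.2 (F q.1) ^ 2) hY.aemeasurable
    (integrable_dist_sq_of_boundedSpace measurable_snd (hF.comp measurable_fst))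

theorem integral_dist_sq_lt_of_strict_condFrechetMean (hX : Measurable X) (hY : Measurable Y)
    {F F₀ : β → Ω} (hF : Measurable F) (hF₀ : Measurable F₀)
    (hmean : ∀ x ω, ω ≠ F₀ x →
      ∫ y, dist y (F₀ x) ^ 2 ∂condDistrib Y X μ x < ∫ y, dist y ω ^ 2 ∂condDistrib Y X μ x)
    (hne : 0 < μ {a | F (X a) ≠ F₀ (X a)}) :
    ∫ a, dist (Y a) (F₀ (X a)) ^ 2 ∂μ < ∫ a, dist (Y a) (F (X a)) ^ 2 ∂μ := by
  rw [integral_dist_sq_eq_integral_condDistrib hX hY hF,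
    integral_dist_sq_eq_integral_condDistrib hX hY hF₀]
  have hle : ∀ x, ∫ y, dist y (F₀ x) ^ 2 ∂condDistrib Y X μ x
      ≤ ∫ y, dist y (F x) ^ 2 ∂condDistrib Y X μ x := fun x => by
    by_cases h : F x = F₀ x
    · rw [h]
    · exact (hmean x (F x) h).le
  refine integral_lt_integral_of_ae_le_of_measure_setOfPred_lt_ne_zero
    (integrable_integral_dist_sq_condDistrib hY hF₀) (integrable_integral_dist_sq_condDistrib hY hF)
    (Eventually.of_forall hle) (ne_of_gt ?_)
  calc 0 < μ (X ⁻¹' {x | F x ≠ F₀ x}) := hne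
    _ ≤ μ.map X {x | F x ≠ F₀ x} := Measure.le_map_apply hX.aemeasurable _
    _ ≤ _ := measure_mono fun x hx => hmean x (F x) hx

end FrechetRisk

theorem stmt_8_general {α : Type*} [MeasurableSpace α]
    {Ω : Type*} [MetricSpace Ω] [MeasurableSpace Ω] [BorelSpace Ω] [PolishSpace Ω] [Nonempty Ω]
    (hbdd : Bornology.IsBounded (Set.univ : Set Ω))
    (μ : Measure α) [IsProbabilityMeasure μ] (p : ℕ)
    (X : α → (Fin p → ℝ)) (Y : α → Ω) (hX : Measurable X) (hY : Measurable Y)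
    (g : (Fin p → ℝ) → ℝ → Ω) (hgmeas : ∀ θ : Fin p → ℝ, Measurable (g θ))
    (θ₀ : Fin p → ℝ)
    -- strict uniqueness of the conditional Fréchet mean given X = x
    (h0 : ∀ x : Fin p → ℝ, ∀ ω : Ω, ω ≠ g θ₀ (∑ j, θ₀ j * x j) →
      (∫ y, dist y (g θ₀ (∑ j, θ₀ j * x j)) ^ 2 ∂((condDistrib Y X μ) x))
        < ∫ y, dist y ω ^ 2 ∂((condDistrib Y X μ) x))
    -- distinguishability: θ ≠ θ₀ gives different fitted objects with positive probability
    (hdist : ∀ θ : Fin p → ℝ, ‖θ‖ = 1 → θ ≠ θ₀ →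
      0 < μ {a | g θ (∑ j, θ j * X a j) ≠ g θ₀ (∑ j, θ₀ j * X a j)}) :
    ∀ θ : Fin p → ℝ, ‖θ‖ = 1 → θ ≠ θ₀ →
      (∫ a, dist (Y a) (g θ₀ (∑ j, θ₀ j * X a j)) ^ 2 ∂μ)
        < ∫ a, dist (Y a) (g θ (∑ j, θ j * X a j)) ^ 2 ∂μ := by
  intro θ hθ hne
  have : BoundedSpace Ω := Bornology.isBounded_univ.1 hbdd
  have hindex : ∀ c : Fin p → ℝ, Measurable fun x : Fin p → ℝ => g c (∑ j, c j * x j) :=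
    fun c => (hgmeas c).comp (Finset.measurable_sum _ fun j _ => by fun_prop)
  exact integral_dist_sq_lt_of_strict_condFrechetMean hX hY (hindex θ) (hindex θ₀) h0
    (hdist θ hθ hne)

/-- Identifiability in the Fréchet single index model: under the positive-probability
distinguishability condition and strict uniqueness of the conditional Fréchet means given `X`,
the criterion `W(θ) = E[d²(Y, g(θ'X, θ))]` is uniquely minimized at `θ₀`:
`W(θ) > W(θ₀)` for every unit vector `θ ≠ θ₀`. -/
theorem stmt_8 {α : Type*} [MeasurableSpace α]
    {Ω : Type*} [MetricSpace Ω] [MeasurableSpace Ω] [BorelSpace Ω] [PolishSpace Ω] [Nonempty Ω]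
    (hbdd : Bornology.IsBounded (Set.univ : Set Ω))
    (μ : Measure α) [IsProbabilityMeasure μ] (p : ℕ)
    (X : α → (Fin p → ℝ)) (Y : α → Ω) (hX : Measurable X) (hY : Measurable Y)
    (g : (Fin p → ℝ) → ℝ → Ω) (hgmeas : ∀ θ : Fin p → ℝ, Measurable (g θ))
    (θ₀ : Fin p → ℝ) (hθ₀ : ‖θ₀‖ = 1)
    -- for each unit θ and each x, g(θ'x, θ) minimizes ω ↦ E[d²(Y, ω) | θ'X = θ'x]
    (hg : ∀ θ : Fin p → ℝ, ‖θ‖ = 1 → ∀ x : Fin p → ℝ, ∀ ω : Ω,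
      (∫ y, dist y (g θ (∑ j, θ j * x j)) ^ 2
          ∂((condDistrib Y (fun a => ∑ j, θ j * X a j) μ) (∑ j, θ j * x j)))
        ≤ ∫ y, dist y ω ^ 2
          ∂((condDistrib Y (fun a => ∑ j, θ j * X a j) μ) (∑ j, θ j * x j)))
    -- strict uniqueness of the conditional Fréchet mean given X = x
    (h0 : ∀ x : Fin p → ℝ, ∀ ω : Ω, ω ≠ g θ₀ (∑ j, θ₀ j * x j) →
      (∫ y, dist y (g θ₀ (∑ j, θ₀ j * x j)) ^ 2 ∂((condDistrib Y X μ) x))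
        < ∫ y, dist y ω ^ 2 ∂((condDistrib Y X μ) x))
    -- distinguishability: θ ≠ θ₀ gives different fitted objects with positive probability
    (hdist : ∀ θ : Fin p → ℝ, ‖θ‖ = 1 → θ ≠ θ₀ →
      0 < μ {a | g θ (∑ j, θ j * X a j) ≠ g θ₀ (∑ j, θ₀ j * X a j)}) :
    ∀ θ : Fin p → ℝ, ‖θ‖ = 1 → θ ≠ θ₀ →
      (∫ a, dist (Y a) (g θ₀ (∑ j, θ₀ j * X a j)) ^ 2 ∂μ)
        < ∫ a, dist (Y a) (g θ (∑ j, θ j * X a j)) ^ 2 ∂μ :=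
  stmt_8_general hbdd μ p X Y hX hY g hgmeas θ₀ h0 hdist
end
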